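/- For every element α of the double Catalan monoid DC_n, the fiber Ψ_α = {w ∈ S_n : Ψ(z_w) = α} of the canonical surjection Ψ : H_n → DC_n contains exactly one 4321-avoiding permutation. -/

import Mathlib

open Pointwise

/-- The simple transposition `(i, i+1)` in the symmetric group on `Fin n`. -/
def simpleT {n : ℕ} (i : Fin (n - 1)) : Equiv.Perm (Fin n) :=
  Equiv.swap ⟨i.1, by have := i.2; omega⟩ ⟨i.1 + 1, by have := i.2; omega⟩

/-- Defining relations of the 0-Hecke monoid. -/
def heckeRels (n : ℕ) : Set (FreeMonoid (Fin (n - 1)) × FreeMonoid (Fin (n - 1))) :=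
  {p | (∃ i, p = (FreeMonoid.of i * FreeMonoid.of i, FreeMonoid.of i)) ∨
       (∃ i j, i.1 + 2 ≤ j.1 ∧
          p = (FreeMonoid.of i * FreeMonoid.of j, FreeMonoid.of j * FreeMonoid.of i)) ∨
       (∃ i j, j.1 = i.1 + 1 ∧
          p = (FreeMonoid.of i * FreeMonoid.of j * FreeMonoid.of i,
               FreeMonoid.of j * FreeMonoid.of i * FreeMonoid.of j))}

/-- The congruence on the free monoid generated by the 0-Hecke relations. -/
def heckeCon (n : ℕ) : Con (FreeMonoid (Fin (n - 1))) :=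
  conGen (fun a b => (a, b) ∈ heckeRels n)

/-- The 0-Hecke monoid `H_n`. -/
abbrev Hecke (n : ℕ) := (heckeCon n).Quotient

/-- The generator `e_i` of the 0-Hecke monoid. -/
def heckeGen (n : ℕ) (i : Fin (n - 1)) : Hecke n := (heckeCon n).mk' (FreeMonoid.of i)

/-- Binary relations on `Fin n` (equivalently, `n × n` Boolean matrices),
with `ξ i j` meaning the `(i,j)` entry is `1`. -/
abbrev BRel (n : ℕ) := Fin n → Fin n → Prop

/-- The monoid of binary relations / Boolean matrices, under relational
composition (= Boolean matrix multiplication). -/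
instance BRel.instMonoid (n : ℕ) : Monoid (BRel n) where
  mul r s := fun i j => ∃ k, r i k ∧ s k j
  one := fun i j => i = j
  mul_assoc r s t := by
    funext i j
    show (∃ k, (∃ m, r i m ∧ s m k) ∧ t k j) = (∃ m, r i m ∧ ∃ k, s m k ∧ t k j)
    apply propext; tauto
  one_mul r := by
    funext i j
    show (∃ k, i = k ∧ r k j) = r i j
    apply propext
    constructor
    · rintro ⟨k, rfl, h⟩; exact h
    · intro h; exact ⟨i, rfl, h⟩
  mul_one r := by
    funext i j
    show (∃ k, r i k ∧ k = j) = r i j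
    apply propext
    constructor
    · rintro ⟨k, h, rfl⟩; exact h
    · intro h; exact ⟨j, h, rfl⟩

theorem BRel.mul_def {n : ℕ} (r s : BRel n) (i j : Fin n) :
    (r * s) i j ↔ ∃ k, r i k ∧ s k j := Iff.rfl

theorem BRel.one_def {n : ℕ} (i j : Fin n) : (1 : BRel n) i j ↔ i = j := Iff.rfl

/-- The generator `ε_i = Φ(id) + Φ(s_i)` of the double Catalan monoid:
the identity matrix plus extra `1` entries at `(i, i+1)` and `(i+1, i)`. -/
def eps {n : ℕ} (i : Fin (n - 1)) : BRel n := fun a b => a = b ∨ a = simpleT i b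

/-- The double Catalan monoid `DC_n`, the submonoid of Boolean matrices
generated by the `ε_i`. -/
def DC (n : ℕ) : Submonoid (BRel n) := Submonoid.closure (Set.range (eps (n := n)))

open Classical in
/-- `max(ξ)(j)` : the largest row index `i` with `ξ i j` (for a reflexive
relation; the diagonal element `j` is thrown in to guarantee nonemptiness). -/
noncomputable def maxF {n : ℕ} (ξ : BRel n) (j : Fin n) : Fin n :=
  (insert j (Finset.univ.filter fun i => ξ i j)).max' (Finset.insert_nonempty _ _)

open Classical in
/-- `min(ξ)(j)` : the smallest row index `i` with `ξ i j`. -/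
noncomputable def minF {n : ℕ} (ξ : BRel n) (j : Fin n) : Fin n :=
  (insert j (Finset.univ.filter fun i => ξ i j)).min' (Finset.insert_nonempty _ _)

/-- A set of `Fin n` is an interval of consecutive integers. -/
def IsIntervalSet {n : ℕ} (S : Set (Fin n)) : Prop :=
  ∀ ⦃a b c : Fin n⦄, a ≤ b → b ≤ c → a ∈ S → c ∈ S → b ∈ S

/-- A binary relation is convex if it is reflexive and all its rows and
columns are intervals. -/
def IsConvexRel {n : ℕ} (ξ : BRel n) : Prop :=
  (∀ i, ξ i i) ∧ (∀ j, IsIntervalSet {i | ξ i j}) ∧ (∀ j, IsIntervalSet {i | ξ j i})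

/-- The left-to-right maximum function `α_w`. -/
def lrMax {n : ℕ} (w : Equiv.Perm (Fin n)) (j : Fin n) : Fin n :=
  (Finset.Iic j).sup' ⟨j, Finset.mem_Iic.2 le_rfl⟩ (fun k => w k)

/-- The right-to-left minimum function `β_w`. -/
def rlMin {n : ℕ} (w : Equiv.Perm (Fin n)) (j : Fin n) : Fin n :=
  (Finset.Ici j).inf' ⟨j, Finset.mem_Ici.2 le_rfl⟩ (fun k => w k)

/-- The Boolean matrix `Ψ(z_w)`, the image of `w` in the double Catalan
monoid: the `(i,j)` entry is `1` iff `β_w(j) ≤ i ≤ α_w(j)`. -/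
def psiMat {n : ℕ} (w : Equiv.Perm (Fin n)) : BRel n :=
  fun i j => rlMin w j ≤ i ∧ i ≤ lrMax w j

/-- `l` is a reduced word for the permutation `w`. -/
def IsRedWord {n : ℕ} (w : Equiv.Perm (Fin n)) (l : List (Fin (n - 1))) : Prop :=
  (l.map simpleT).prod = w ∧
    ∀ l' : List (Fin (n - 1)), (l'.map simpleT).prod = w → l.length ≤ l'.length

/-- The Bruhat order on the symmetric group, via the subword property. -/
def bruhatLE {n : ℕ} (u w : Equiv.Perm (Fin n)) : Prop :=
  ∃ lw, IsRedWord w lw ∧ ∃ lu, lu.Sublist lw ∧ IsRedWord u lu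

/-- `w` is 321-avoiding. -/
def Avoids321 {n : ℕ} (w : Equiv.Perm (Fin n)) : Prop :=
  ¬ ∃ i j k : Fin n, i < j ∧ j < k ∧ w k < w j ∧ w j < w i

/-- `w` is 312-avoiding. -/
def Avoids312 {n : ℕ} (w : Equiv.Perm (Fin n)) : Prop :=
  ¬ ∃ i j k : Fin n, i < j ∧ j < k ∧ w j < w k ∧ w k < w i

/-- `w` is 4321-avoiding. -/
def Avoids4321 {n : ℕ} (w : Equiv.Perm (Fin n)) : Prop :=
  ¬ ∃ i j k l : Fin n, i < j ∧ j < k ∧ k < l ∧ w l < w k ∧ w k < w j ∧ w j < w i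

/-- The monoid `C_n^+` of order-preserving non-decreasing transformations. -/
def Cplus (n : ℕ) : Submonoid (Function.End (Fin n)) where
  carrier := {f | Monotone f ∧ ∀ i, i ≤ f i}
  one_mem' := ⟨monotone_id, fun _ => le_rfl⟩
  mul_mem' := by
    rintro f g ⟨hf1, hf2⟩ ⟨hg1, hg2⟩
    exact ⟨hf1.comp hg1, fun i => (hg2 i).trans (hf2 (g i))⟩

/-- The monoid `C_n^-` of order-preserving non-increasing transformations. -/
def Cminus (n : ℕ) : Submonoid (Function.End (Fin n)) where
  carrier := {f | Monotone f ∧ ∀ i, f i ≤ i}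
  one_mem' := ⟨monotone_id, fun _ => le_rfl⟩
  mul_mem' := by
    rintro f g ⟨hf1, hf2⟩ ⟨hg1, hg2⟩
    exact ⟨hf1.comp hg1, fun i => (hf2 (g i)).trans (hg2 i)⟩

/-!
A position `j` of `w` is a record if `w j` is a left-to-right maximum or a right-to-left minimum.
The records of `w` and the values there can be read off `α_w` and `β_w`, and `w` contains `4321`
exactly when its values at the other positions are not increasing. Hence two `4321`-avoiding
permutations of one fiber agree at the records and list the remaining values increasingly on the
same positions, so they coincide. For existence, swapping an inversion between two non-records
changes neither `α` nor `β` but increases `∑ i, i * w i`, so a maximiser of this weight over the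
fiber avoids `4321`.
-/

theorem Equiv.image_eq_image_of_eqOn_compl {α β : Type*} {e e' : α ≃ β} {s : Set α}
    (h : Set.EqOn e e' sᶜ) : e '' s = e' '' s := by
  rw [← compl_compl s, Set.image_compl_eq e.bijective, Set.image_compl_eq e'.bijective,
    h.image_eq]

section Records

variable {n : ℕ}

theorem apply_le_lrMax (w : Equiv.Perm (Fin n)) {i j : Fin n} (h : i ≤ j) : w i ≤ lrMax w j :=
  Finset.le_sup' (fun k => w k) (Finset.mem_Iic.2 h)

theorem rlMin_le_apply (w : Equiv.Perm (Fin n)) {i j : Fin n} (h : i ≤ j) : rlMin w i ≤ w j :=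
  Finset.inf'_le (fun k => w k) (Finset.mem_Ici.2 h)

theorem lrMax_mono (w : Equiv.Perm (Fin n)) : Monotone (lrMax w) := fun _ _ hab =>
  Finset.sup'_le _ _ fun _ hi => apply_le_lrMax w ((Finset.mem_Iic.1 hi).trans hab)

theorem rlMin_mono (w : Equiv.Perm (Fin n)) : Monotone (rlMin w) := fun _ _ hab =>
  Finset.le_inf' _ _ fun _ hi => rlMin_le_apply w (hab.trans (Finset.mem_Ici.1 hi))

theorem exists_apply_eq_lrMax (w : Equiv.Perm (Fin n)) (j : Fin n) :
    ∃ i ≤ j, w i = lrMax w j := by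
  obtain ⟨i, hi, h⟩ := Finset.exists_mem_eq_sup' ⟨j, Finset.mem_Iic.2 le_rfl⟩ fun k => w k
  exact ⟨i, Finset.mem_Iic.1 hi, h.symm⟩

theorem exists_apply_eq_rlMin (w : Equiv.Perm (Fin n)) (j : Fin n) :
    ∃ l ≥ j, w l = rlMin w j := by
  obtain ⟨l, hl, h⟩ := Finset.exists_mem_eq_inf' ⟨j, Finset.mem_Ici.2 le_rfl⟩ fun k => w k
  exact ⟨l, Finset.mem_Ici.1 hl, h.symm⟩

theorem psiMat_eq_iff {v w : Equiv.Perm (Fin n)} :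
    psiMat v = psiMat w ↔ lrMax v = lrMax w ∧ rlMin v = rlMin w := by
  have hcol (u : Equiv.Perm (Fin n)) (j : Fin n) :
      {i | psiMat u i j} = Set.Icc (rlMin u j) (lrMax u j) := rfl
  have hne (j : Fin n) : rlMin v j ≤ lrMax v j :=
    (rlMin_le_apply v le_rfl).trans (apply_le_lrMax v le_rfl)
  constructor
  · intro h
    have hj (j : Fin n) : rlMin v j = rlMin w j ∧ lrMax v j = lrMax w j :=
      (Set.Icc_eq_Icc_iff (hne j)).1 (by rw [← hcol, ← hcol, h])
    exact ⟨funext fun j => (hj j).2, funext fun j => (hj j).1⟩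
  · rintro ⟨hα, hβ⟩
    unfold psiMat
    rw [hα, hβ]

theorem lrMax_eq_apply_iff (w : Equiv.Perm (Fin n)) (j : Fin n) :
    lrMax w j = w j ↔ ∀ i < j, lrMax w i < lrMax w j := by
  constructor
  · intro h i hij
    refine (lrMax_mono w hij.le).lt_of_ne fun heq => ?_
    obtain ⟨i', hi', h'⟩ := exists_apply_eq_lrMax w i
    exact (hi'.trans_lt hij).ne (w.injective (by rw [h', heq, h]))
  · intro h
    obtain ⟨i, hij, hi⟩ := exists_apply_eq_lrMax w j
    rcases hij.lt_or_eq with hij | rfl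
    · exact absurd (hi ▸ apply_le_lrMax w le_rfl) (h i hij).not_ge
    · exact hi.symm

theorem rlMin_eq_apply_iff (w : Equiv.Perm (Fin n)) (j : Fin n) :
    rlMin w j = w j ↔ ∀ l > j, rlMin w j < rlMin w l := by
  constructor
  · intro h l hjl
    refine (rlMin_mono w hjl.le).lt_of_ne' fun heq => ?_
    obtain ⟨l', hl', h'⟩ := exists_apply_eq_rlMin w l
    exact (hjl.trans_le hl').ne' (w.injective (by rw [h', heq, h]))
  · intro h
    obtain ⟨l, hjl, hl⟩ := exists_apply_eq_rlMin w j
    rcases hjl.lt_or_eq with hjl | rfl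
    · exact absurd (hl ▸ rlMin_le_apply w le_rfl) (h l hjl).not_ge
    · exact hl.symm

def IsRecord (w : Equiv.Perm (Fin n)) (j : Fin n) : Prop :=
  lrMax w j = w j ∨ rlMin w j = w j

theorem not_isRecord_iff {w : Equiv.Perm (Fin n)} {j : Fin n} :
    ¬ IsRecord w j ↔ rlMin w j < w j ∧ w j < lrMax w j := by
  rw [IsRecord, not_or, (rlMin_le_apply w le_rfl).lt_iff_ne, (apply_le_lrMax w le_rfl).lt_iff_ne,
    ne_comm (a := w j)]
  exact and_comm

theorem apply_eq_of_isRecord {v w : Equiv.Perm (Fin n)} (hα : lrMax v = lrMax w)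
    (hβ : rlMin v = rlMin w) {j : Fin n} (hj : IsRecord w j) : v j = w j := by
  rcases hj with hj | hj
  · have hv := (lrMax_eq_apply_iff v j).2 (hα ▸ (lrMax_eq_apply_iff w j).1 hj)
    rw [← hv, hα, hj]
  · have hv := (rlMin_eq_apply_iff v j).2 (hβ ▸ (rlMin_eq_apply_iff w j).1 hj)
    rw [← hv, hβ, hj]

theorem IsRecord.of_lrMax_rlMin_eq {v w : Equiv.Perm (Fin n)} (hα : lrMax v = lrMax w)
    (hβ : rlMin v = rlMin w) {j : Fin n} (hj : IsRecord w j) : IsRecord v j := by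
  rw [IsRecord, hα, hβ, apply_eq_of_isRecord hα hβ hj]
  exact hj

theorem avoids4321_iff (v : Equiv.Perm (Fin n)) :
    Avoids4321 v ↔ ∀ j k, j < k → ¬ IsRecord v j → ¬ IsRecord v k → v j < v k := by
  simp only [not_isRecord_iff]
  constructor
  · rintro hv j k hjk ⟨-, hj⟩ ⟨hk, -⟩
    by_contra! hkj
    obtain ⟨i, hij, hi⟩ := exists_apply_eq_lrMax v j
    obtain ⟨l, hkl, hl⟩ := exists_apply_eq_rlMin v k
    refine hv ⟨i, j, k, l, hij.lt_of_ne ?_, hjk, hkl.lt_of_ne' ?_, hl ▸ hk,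
      hkj.lt_of_ne (v.injective.ne hjk.ne'), hi ▸ hj⟩
    · rintro rfl; exact hj.ne hi
    · rintro rfl; exact hk.ne' hl
  · rintro hv ⟨i, j, k, l, hij, hjk, hkl, hlk, hkj, hji⟩
    refine (hv j k hjk ⟨?_, ?_⟩ ⟨?_, ?_⟩).not_gt hkj
    · exact (rlMin_le_apply v (hjk.trans hkl).le).trans_lt (hlk.trans hkj)
    · exact hji.trans_le (apply_le_lrMax v hij.le)
    · exact (rlMin_le_apply v hkl.le).trans_lt hlk
    · exact (hkj.trans hji).trans_le (apply_le_lrMax v (hij.trans hjk).le)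

end Records

section Fiber

variable {n : ℕ}

theorem lrMax_mul_swap {w : Equiv.Perm (Fin n)} {j k : Fin n} (hjk : j < k) (hkj : w k < w j)
    (hj : w j < lrMax w j) : lrMax (w * Equiv.swap j k) = lrMax w := by
  funext p
  refine le_antisymm (Finset.sup'_le _ _ fun i hi => ?_) ?_
  · have hip := Finset.mem_Iic.1 hi
    change w (Equiv.swap j k i) ≤ lrMax w p
    rcases eq_or_ne i j with rfl | hij
    · rw [Equiv.swap_apply_left]
      exact hkj.le.trans (apply_le_lrMax w hip)
    rcases eq_or_ne i k with rfl | hik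
    · rw [Equiv.swap_apply_right]
      exact apply_le_lrMax w (hjk.le.trans hip)
    · rw [Equiv.swap_apply_of_ne_of_ne hij hik]
      exact apply_le_lrMax w hip
  · obtain ⟨i, hip, hi⟩ := exists_apply_eq_lrMax w p
    have hij : i ≠ j := by
      rintro rfl
      exact (hj.trans_le (lrMax_mono w hip)).ne hi
    have hσ : Equiv.swap j k i ≤ p := by
      rcases eq_or_ne i k with rfl | hik
      · rw [Equiv.swap_apply_right]
        exact hjk.le.trans hip
      · rwa [Equiv.swap_apply_of_ne_of_ne hij hik]
    calc lrMax w p = (w * Equiv.swap j k) (Equiv.swap j k i) := by simp [hi]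
      _ ≤ lrMax (w * Equiv.swap j k) p := apply_le_lrMax _ hσ

theorem rlMin_mul_swap {w : Equiv.Perm (Fin n)} {j k : Fin n} (hjk : j < k) (hkj : w k < w j)
    (hk : rlMin w k < w k) : rlMin (w * Equiv.swap j k) = rlMin w := by
  funext p
  refine le_antisymm ?_ (Finset.le_inf' _ _ fun l hl => ?_)
  · obtain ⟨l, hpl, hl⟩ := exists_apply_eq_rlMin w p
    have hlk : l ≠ k := by
      rintro rfl
      exact ((rlMin_mono w hpl).trans_lt hk).ne' hl
    have hσ : p ≤ Equiv.swap j k l := by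
      rcases eq_or_ne l j with rfl | hlj
      · rw [Equiv.swap_apply_left]
        exact hpl.trans hjk.le
      · rwa [Equiv.swap_apply_of_ne_of_ne hlj hlk]
    calc rlMin (w * Equiv.swap j k) p ≤ (w * Equiv.swap j k) (Equiv.swap j k l) :=
          rlMin_le_apply _ hσ
      _ = rlMin w p := by simp [hl]
  · have hpl := Finset.mem_Ici.1 hl
    change rlMin w p ≤ w (Equiv.swap j k l)
    rcases eq_or_ne l k with rfl | hlk
    · rw [Equiv.swap_apply_right]
      exact (rlMin_le_apply w hpl).trans hkj.le
    rcases eq_or_ne l j with rfl | hlj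
    · rw [Equiv.swap_apply_left]
      exact rlMin_le_apply w (hpl.trans hjk.le)
    · rw [Equiv.swap_apply_of_ne_of_ne hlj hlk]
      exact rlMin_le_apply w hpl

def posWeight (w : Equiv.Perm (Fin n)) : ℤ := ∑ i, (i.val : ℤ) * ((w i).val : ℤ)

theorem posWeight_lt_mul_swap {w : Equiv.Perm (Fin n)} {j k : Fin n} (hjk : j < k)
    (hkj : w k < w j) : posWeight w < posWeight (w * Equiv.swap j k) := by
  have hdiff : posWeight (w * Equiv.swap j k) - posWeight w =
      ((k.val : ℤ) - j.val) * ((w j).val - (w k).val) := by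
    rw [posWeight, posWeight, ← Finset.sum_sub_distrib, Fintype.sum_eq_add j k hjk.ne]
    · simp only [Equiv.Perm.mul_apply, Equiv.swap_apply_left, Equiv.swap_apply_right]
      ring
    · rintro i ⟨hij, hik⟩
      simp [Equiv.swap_apply_of_ne_of_ne hij hik]
  have hpos : 0 < ((k.val : ℤ) - j.val) * ((w j).val - (w k).val) :=
    mul_pos (sub_pos.2 (by exact_mod_cast hjk)) (sub_pos.2 (by exact_mod_cast hkj))
  linarith

theorem exists_avoids4321_lrMax_eq_rlMin_eq (w : Equiv.Perm (Fin n)) :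
    ∃ v : Equiv.Perm (Fin n), lrMax v = lrMax w ∧ rlMin v = rlMin w ∧ Avoids4321 v := by
  classical
  obtain ⟨v, hv, hmax⟩ := (Finset.univ.filter fun v : Equiv.Perm (Fin n) =>
    lrMax v = lrMax w ∧ rlMin v = rlMin w).exists_max_image posWeight ⟨w, by simp⟩
  obtain ⟨hα, hβ⟩ := (Finset.mem_filter.1 hv).2
  refine ⟨v, hα, hβ, (avoids4321_iff v).2 fun j k hjk hj hk => ?_⟩
  by_contra! hkj
  replace hkj := hkj.lt_of_ne (v.injective.ne hjk.ne')
  have hle := hmax (v * Equiv.swap j k) (by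
    simp [lrMax_mul_swap hjk hkj (not_isRecord_iff.1 hj).2,
      rlMin_mul_swap hjk hkj (not_isRecord_iff.1 hk).1, hα, hβ])
  exact hle.not_gt (posWeight_lt_mul_swap hjk hkj)

theorem eq_of_avoids4321 {v v' : Equiv.Perm (Fin n)} (hα : lrMax v = lrMax v')
    (hβ : rlMin v = rlMin v') (hv : Avoids4321 v) (hv' : Avoids4321 v') : v = v' := by
  set S := {j | ¬ IsRecord v j}
  have hrec : Set.EqOn v v' Sᶜ := fun j hj =>
    (apply_eq_of_isRecord hα.symm hβ.symm (not_not.1 hj)).symm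
  have hS' (j : S) : ¬ IsRecord v' j := fun h => j.2 (h.of_lrMax_rlMin_eq hα hβ)
  have hmono : StrictMono fun j : S => v j := fun j k hjk =>
    (avoids4321_iff v).1 hv j k hjk j.2 k.2
  have hmono' : StrictMono fun j : S => v' j := fun j k hjk =>
    (avoids4321_iff v').1 hv' j k hjk (hS' j) (hS' k)
  have hrange : (Set.range fun j : S => v j) = Set.range fun j : S => v' j := by
    rw [← Set.image_eq_range, ← Set.image_eq_range,
      Equiv.image_eq_image_of_eqOn_compl hrec]
  have hS := congrFun ((hmono.range_inj hmono').1 hrange)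
  refine Equiv.ext fun j => ?_
  by_cases hj : j ∈ S
  · exact hS ⟨j, hj⟩
  · exact hrec hj

end Fiber

/-- Every fiber of the canonical surjection onto the double Catalan
monoid contains exactly one 4321-avoiding permutation. -/
theorem stmt_10 (n : ℕ) (w : Equiv.Perm (Fin n)) :
    ∃! v : Equiv.Perm (Fin n), psiMat v = psiMat w ∧ Avoids4321 v := by
  obtain ⟨v, hα, hβ, hv⟩ := exists_avoids4321_lrMax_eq_rlMin_eq w
  refine ⟨v, ⟨psiMat_eq_iff.2 ⟨hα, hβ⟩, hv⟩, fun v' ⟨h', hv'⟩ => ?_⟩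
  obtain ⟨hα', hβ'⟩ := psiMat_eq_iff.1 h'
  exact eq_of_avoids4321 (hα'.trans hα.symm) (hβ'.trans hβ.symm) hv' hv
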